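/- If λ is weakly inaccessible and K is μ-accessible for unboundedly many regular μ < λ, then K has no object of presentability rank λ. In particular, in a well μ-accessible category, the presentability rank of any object that is not μ-presentable is a successor cardinal. -/

import Mathlib

open CategoryTheory Limits Cardinal

universe u v u₂ v₂

/-- A preorder is `μ`-directed if every subset of cardinality `< μ` has an upper bound. -/
def IsCardDirected (μ : Cardinal.{v}) (J : Type v) [Preorder J] : Prop :=
  ∀ S : Set J, #S < μ → ∃ b, ∀ s ∈ S, s ≤ b

/-- An object is `μ`-presentable if its hom-functor preserves `μ`-directed colimits. -/
def IsPresentableObj (μ : Cardinal.{v}) {K : Type u} [Category.{v} K] (M : K) : Prop :=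
  ∀ (J : Type v) (_ : Preorder J), IsCardDirected μ J →
    Nonempty (PreservesColimitsOfShape J (coyoneda.obj (Opposite.op M)))

/-- `(<λ)`-presentable: `θ`-presentable for some regular `θ < max(λ, ℵ₁)`. -/
def IsLtPresentableObj (lam : Cardinal.{v}) {K : Type u} [Category.{v} K] (M : K) : Prop :=
  ∃ θ : Cardinal.{v}, θ.IsRegular ∧ θ < max lam (Cardinal.aleph 1) ∧ IsPresentableObj θ M

/-- `M` has presentability rank `lam`: the least regular cardinal at which `M` is presentable. -/
def HasPresRank (lam : Cardinal.{v}) {K : Type u} [Category.{v} K] (M : K) : Prop :=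
  lam.IsRegular ∧ IsPresentableObj lam M ∧
    ∀ ν : Cardinal.{v}, ν.IsRegular → IsPresentableObj ν M → lam ≤ ν

/-- `K` has all `μ`-directed colimits. -/
def HasMuDirectedColimits (μ : Cardinal.{v}) (K : Type u) [Category.{v} K] : Prop :=
  ∀ (J : Type v) (_ : Preorder J), IsCardDirected μ J → HasColimitsOfShape J K

/-- `(μ, <λ)`-accessibility of a category `K`. -/
def IsAccCat (μ lam : Cardinal.{v}) (K : Type u) [Category.{v} K] : Prop :=
  HasMuDirectedColimits μ K ∧
  (∃ S : Set K, Small.{v} S ∧ ∀ M : K, IsLtPresentableObj lam M → ∃ N ∈ S, Nonempty (M ≅ N)) ∧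
  (∀ M : K, ∃ (J : Type v) (_ : Preorder J) (D : J ⥤ K) (c : Cocone D),
     IsCardDirected μ J ∧ (∀ j, IsLtPresentableObj lam (D.obj j)) ∧
     Nonempty (IsColimit c) ∧ c.pt = M)

/-!
For each of the cofinally many regular `μ < λ`, the object `M` is a `μ`-filtered colimit of
`μ`-presentable objects. The stages of all these presentations, with all maps over `M` between
them, form a small category which is `λ`-filtered (fewer than `λ` stages and arrows are absorbed by
a single presentation whose `μ` exceeds their number and all their presentability ranks, which
exists as `λ` is regular) and whose colimit is `M`. If `M` were `λ`-presentable, `𝟙 M` would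
factor through a stage, so `M` would be a retract of a `μ`-presentable object with `μ < λ`.
For the second statement, a limit rank `λ > μ₀` would be such a `λ`, as every `θ⁺` is regular.
-/

lemma exists_gt_and_ge_of_cofinal {W : Type*} {κ : Cardinal.{v}} (hκ : κ.IsRegular)
    {μ : W → Cardinal.{v}} (hμ : ∀ w, μ w < κ) (hcof : ∀ β < κ, ∃ w, β < μ w)
    {β : Cardinal.{v}} (hβ : β < κ) {ι : Type v} (hι : #ι < κ) (w : ι → W) :
    ∃ w', β < μ w' ∧ ∀ i, μ (w i) ≤ μ w' := by
  obtain ⟨w', hw'⟩ := hcof (max β (⨆ i, μ (w i)))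
    (max_lt hβ (iSup_lt_of_lt_cof_ord (by rwa [hκ.cof_ord]) fun i => hμ _))
  exact ⟨w', (le_max_left _ _).trans_lt hw',
    fun i => (le_ciSup bddAbove_of_small i).trans ((le_max_right _ _).trans hw'.le)⟩

namespace CategoryTheory.Limits.ColimitPresentation

section Stages

variable {K : Type u} [Category.{v} K] {X : K} {W : Type v} {J : W → Type v}
  [∀ w, SmallCategory (J w)] (p : ∀ w, ColimitPresentation (J w) X)

def stageOver (a : Σ w, J w) : Over X := Over.mk ((p a.1).ι.app a.2)

abbrev Stages := InducedCategory (Over X) (stageOver p)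

variable {p} in
def stageHom {a b : Stages p} (f : (stageOver p a).left ⟶ (stageOver p b).left)
    (hf : f ≫ (stageOver p b).hom = (stageOver p a).hom) : a ⟶ b :=
  InducedCategory.homMk (Over.homMk f hf)

def stageIncl (w : W) : J w ⥤ Stages p where
  obj i := ⟨w, i⟩
  map u := stageHom ((p w).diag.map u) ((p w).w u)
  map_id _ := by ext; exact (p w).diag.map_id _
  map_comp _ _ := by ext; exact (p w).diag.map_comp _ _

abbrev stagesDiagram : Stages p ⥤ K := inducedFunctor (stageOver p) ⋙ Over.forget X

def stagesCocone : Cocone (stagesDiagram p) :=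
  (Over.forgetCocone X).whisker (inducedFunctor (stageOver p))

variable {μ : W → Cardinal.{v}} [∀ w, Fact (μ w).IsRegular]
  [∀ w j, IsCardinalPresentable ((p w).diag.obj j) (μ w)]

lemma isCardinalPresentable_stage (a : Stages p) {w : W} (h : μ a.1 ≤ μ w) :
    IsCardinalPresentable ((p a.1).diag.obj a.2) (μ w) :=
  isCardinalPresentable_of_le _ h

variable [∀ w, IsCardinalFiltered (J w) (μ w)]

lemma exists_homs_to_stage {ι : Type*} (x : ι → Stages p) {w : W} (hι : HasCardinalLT ι (μ w))
    (hx : ∀ i, μ (x i).1 ≤ μ w) : ∃ j, ∀ i, Nonempty (x i ⟶ ⟨w, j⟩) := by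
  have (i : ι) : IsCardinalPresentable (stageOver p (x i)).left (μ w) :=
    isCardinalPresentable_stage p (x i) (hx i)
  choose j g hg using fun i =>
    IsCardinalPresentable.exists_hom_of_isColimit (μ w) (p w).isColimit (stageOver p (x i)).hom
  refine ⟨IsCardinalFiltered.max j hι, fun i => ⟨stageHom
    (g i ≫ (p w).diag.map (IsCardinalFiltered.toMax j hι i)) ?_⟩⟩
  exact (Category.assoc _ _ _).trans
    ((congrArg (g i ≫ ·) ((p w).w (IsCardinalFiltered.toMax j hι i))).trans (hg i))

-- Maps in `Stages p` lie over `X`, so parallel maps into a stage agree in the colimit `X`.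
lemma exists_comp_stageIncl_map_eq {ι : Type v} {x : Stages p} {w : W} (hx : μ x.1 ≤ μ w)
    (hι : HasCardinalLT ι (μ w)) {j : J w} (f g : ι → (x ⟶ ⟨w, j⟩)) :
    ∃ (j' : J w) (u : j ⟶ j'),
      ∀ i, f i ≫ (stageIncl p w).map u = g i ≫ (stageIncl p w).map u := by
  have : IsCardinalPresentable (stageOver p x).left (μ w) := isCardinalPresentable_stage p x hx
  choose k u hu using fun i => IsCardinalPresentable.exists_eq_of_isColimit' (μ w)
    (p w).isColimit (i := j) (f i).hom.left (g i).hom.left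
    ((Over.w (f i).hom).trans (Over.w (g i).hom).symm)
  obtain ⟨m, a, b, hab⟩ := IsCardinalFiltered.wideSpan u hι
  refine ⟨m, b, fun i => ?_⟩
  ext
  change (f i).hom.left ≫ (p w).diag.map b = (g i).hom.left ≫ (p w).diag.map b
  rw [← hab i, Functor.map_comp]
  exact (Category.assoc _ _ _).symm.trans
    ((congrArg (· ≫ (p w).diag.map (a i)) (hu i)).trans (Category.assoc _ _ _))

variable {κ : Cardinal.{v}} [Fact κ.IsRegular]

theorem isCardinalFiltered_stages (hμ : ∀ w, μ w < κ) (hcof : ∀ β < κ, ∃ w, β < μ w) :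
    IsCardinalFiltered (Stages p) κ := by
  have hκ : κ.IsRegular := Fact.out
  rw [isCardinalFiltered_iff]
  refine ⟨fun ι x hι => ?_, fun ι x y f hι => ?_⟩
  · rw [hasCardinalLT_iff_cardinal_mk_lt] at hι
    obtain ⟨w, hιw, hxw⟩ := exists_gt_and_ge_of_cofinal hκ hμ hcof hι hι (fun i => (x i).1)
    obtain ⟨j, hj⟩ := exists_homs_to_stage p x ((hasCardinalLT_iff_cardinal_mk_lt _ _).2 hιw) hxw
    exact ⟨⟨w, j⟩, hj⟩
  · rw [hasCardinalLT_iff_cardinal_mk_lt] at hι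
    obtain ⟨w, hw⟩ := hcof (max #ι (max (μ x.1) (μ y.1))) (max_lt hι (max_lt (hμ _) (hμ _)))
    have hxyw (b : Bool) : μ (cond b x y).1 ≤ μ w := by
      cases b
      · exact (le_max_right _ _).trans ((le_max_right _ _).trans hw.le)
      · exact (le_max_left _ _).trans ((le_max_right _ _).trans hw.le)
    obtain ⟨j, hj⟩ := exists_homs_to_stage p (fun b : Bool => cond b x y)
      (hasCardinalLT_of_finite _ _ (Fact.out : (μ w).IsRegular).aleph0_le) hxyw
    obtain ⟨j', u, hu⟩ := exists_comp_stageIncl_map_eq p (hxyw true)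
      ((hasCardinalLT_iff_cardinal_mk_lt _ _).2 ((le_max_left _ _).trans_lt hw))
      (fun i => f i ≫ (hj false).some) (fun _ => (hj true).some)
    exact ⟨⟨w, j'⟩, (hj false).some ≫ (stageIncl p w).map u,
      (hj true).some ≫ (stageIncl p w).map u, fun i => (Category.assoc _ _ _).symm.trans (hu i)⟩

noncomputable def stagesDesc (s : Cocone (stagesDiagram p)) (w : W) : X ⟶ s.pt :=
  (p w).isColimit.desc (s.whisker (stageIncl p w))

lemma ι_app_comp_stagesDesc (s : Cocone (stagesDiagram p)) (w : W) (j : J w) :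
    (p w).ι.app j ≫ stagesDesc p s w = s.ι.app ⟨w, j⟩ :=
  (p w).isColimit.fac _ j

lemma hom_comp_stagesDesc (s : Cocone (stagesDiagram p)) {a : Stages p} {w : W}
    (h : μ a.1 ≤ μ w) : (stageOver p a).hom ≫ stagesDesc p s w = s.ι.app a := by
  have : IsCardinalPresentable (stageOver p a).left (μ w) := isCardinalPresentable_stage p a h
  obtain ⟨j, g, hg⟩ :=
    IsCardinalPresentable.exists_hom_of_isColimit (μ w) (p w).isColimit (stageOver p a).hom
  have hg' : g ≫ (p w).ι.app j = (stageOver p a).hom := hg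
  rw [← hg', Category.assoc, ι_app_comp_stagesDesc]
  exact s.w (stageHom (b := ⟨w, j⟩) g hg)

lemma stagesDesc_eq (s : Cocone (stagesDiagram p)) {w w' : W} (h : μ w ≤ μ w') :
    stagesDesc p s w' = stagesDesc p s w :=
  (p w).isColimit.hom_ext fun j =>
    (hom_comp_stagesDesc p s (a := ⟨w, j⟩) h).trans (ι_app_comp_stagesDesc p s w j).symm

theorem nonempty_isColimit_stagesCocone (hμ : ∀ w, μ w < κ) (hcof : ∀ β < κ, ∃ w, β < μ w) :
    Nonempty (IsColimit (stagesCocone p)) := by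
  obtain ⟨w₀, -⟩ := hcof 0 (Fact.out : κ.IsRegular).pos
  refine ⟨{ desc := fun s => stagesDesc p s w₀, fac := fun s a => ?_, uniq := fun s m hm => ?_ }⟩
  · obtain ⟨w, hw⟩ := hcof (max (μ a.1) (μ w₀)) (max_lt (hμ _) (hμ _))
    rw [← stagesDesc_eq p s ((le_max_right _ _).trans hw.le)]
    exact hom_comp_stagesDesc p s ((le_max_left _ _).trans hw.le)
  · exact (p w₀).isColimit.hom_ext fun j =>
      (hm ⟨w₀, j⟩).trans (ι_app_comp_stagesDesc p s w₀ j).symm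

end Stages

theorem exists_isCardinalPresentable_of_cofinal {K : Type u} [Category.{v} K]
    {X : K} {κ : Cardinal.{v}} [Fact κ.IsRegular] [IsCardinalPresentable X κ]
    {W : Type v} {μ : W → Cardinal.{v}} [∀ w, Fact (μ w).IsRegular]
    (hμ : ∀ w, μ w < κ) (hcof : ∀ β < κ, ∃ w, β < μ w)
    {J : W → Type v} [∀ w, SmallCategory (J w)] [∀ w, IsCardinalFiltered (J w) (μ w)]
    (p : ∀ w, ColimitPresentation (J w) X)
    [∀ w j, IsCardinalPresentable ((p w).diag.obj j) (μ w)] :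
    ∃ w, IsCardinalPresentable X (μ w) := by
  have := isCardinalFiltered_stages p hμ hcof
  obtain ⟨hc⟩ := nonempty_isColimit_stagesCocone p hμ hcof
  obtain ⟨a, g, hg⟩ := IsCardinalPresentable.exists_hom_of_isColimit κ hc (𝟙 X)
  have : IsCardinalPresentable ((stagesDiagram p).obj a) (μ a.1) :=
    isCardinalPresentable_stage p a le_rfl
  exact ⟨a.1, (Retract.mk g (stageOver p a).hom hg).isCardinalPresentable (μ a.1)⟩

end CategoryTheory.Limits.ColimitPresentation

section

variable {K : Type u} [Category.{v} K]

lemma isCardDirected_iff_isCardinalFiltered (κ : Cardinal.{v}) [Fact κ.IsRegular] (J : Type v)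
    [Preorder J] : IsCardDirected κ J ↔ IsCardinalFiltered J κ := by
  refine ⟨fun h => isCardinalFiltered_preorder J κ fun ι s hι => ?_, fun _ S hS => ?_⟩
  · obtain ⟨b, hb⟩ := h (Set.range s) (mk_range_le.trans_lt hι)
    exact ⟨b, fun i => hb _ ⟨i, rfl⟩⟩
  · have hS' : HasCardinalLT S κ := (hasCardinalLT_iff_cardinal_mk_lt _ _).2 hS
    exact ⟨IsCardinalFiltered.max (Subtype.val : S → J) hS',
      fun s hs => leOfHom (IsCardinalFiltered.toMax (Subtype.val : S → J) hS' ⟨s, hs⟩)⟩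

lemma isPresentableObj_iff_isCardinalPresentable (κ : Cardinal.{v}) [Fact κ.IsRegular] (M : K) :
    IsPresentableObj κ M ↔ IsCardinalPresentable M κ := by
  refine ⟨fun h => ⟨fun J _ _ => ?_⟩, fun _ J _ hJ => ?_⟩
  · obtain ⟨α, _, hα, F, _⟩ := IsCardinalFiltered.exists_cardinal_directed J κ
    have := (h α _ ((isCardDirected_iff_isCardinalFiltered κ α).2 hα)).some
    exact Functor.Final.preservesColimitsOfShape_of_final F _
  · have := (isCardDirected_iff_isCardinalFiltered κ J).1 hJ
    exact ⟨preservesColimitsOfShape_of_isCardinalPresentable M κ J⟩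

lemma IsPresentableObj.mono {θ θ' : Cardinal.{v}} {M : K} (hM : IsPresentableObj θ M)
    (h : θ ≤ θ') : IsPresentableObj θ' M :=
  fun J _ hJ => hM J _ fun S hS => hJ S (hS.trans_le h)

lemma IsLtPresentableObj.isCardinalPresentable_of_succ {μ : Cardinal.{v}} [hμ : Fact μ.IsRegular]
    {A : K} (h : IsLtPresentableObj (Order.succ μ) A) : IsCardinalPresentable A μ := by
  obtain ⟨θ, hθ, hθμ, hA⟩ := h
  have : Fact θ.IsRegular := ⟨hθ⟩
  have : IsCardinalPresentable A θ := (isPresentableObj_iff_isCardinalPresentable θ A).1 hA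
  have h₁ : ℵ₁ ≤ Order.succ μ := succ_aleph0 ▸ Order.succ_le_succ hμ.out.aleph0_le
  exact isCardinalPresentable_of_le A (Order.lt_succ_iff.1 (hθμ.trans_eq (max_eq_left h₁)))

lemma IsAccCat.exists_colimitPresentation {μ : Cardinal.{v}} [Fact μ.IsRegular]
    (h : IsAccCat μ (Order.succ μ) K) (M : K) :
    ∃ (J : Type v) (_ : SmallCategory J) (_ : IsCardinalFiltered J μ)
      (p : ColimitPresentation J M), ∀ j, IsCardinalPresentable (p.diag.obj j) μ := by
  obtain ⟨J, _, D, ⟨pt, ι⟩, hJ, hD, ⟨hc⟩, rfl⟩ := h.2.2 M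
  exact ⟨J, inferInstance, (isCardDirected_iff_isCardinalFiltered μ J).1 hJ, ⟨D, ι, hc⟩,
    fun j => (hD j).isCardinalPresentable_of_succ⟩

theorem not_hasPresRank_of_isAccCat {lam : Cardinal.{v}} (hreg : lam.IsRegular)
    (hlim : Order.IsSuccLimit lam)
    (hacc : ∀ κ < lam, ∃ μ : Cardinal.{v},
      κ ≤ μ ∧ μ < lam ∧ μ.IsRegular ∧ IsAccCat μ (Order.succ μ) K) (M : K) :
    ¬ HasPresRank lam M := by
  rintro ⟨-, hM, hmin⟩
  have : Fact lam.IsRegular := ⟨hreg⟩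
  have : IsCardinalPresentable M lam := (isPresentableObj_iff_isCardinalPresentable lam M).1 hM
  let e := equivShrink.{v} (Set.Iio lam)
  choose μ hle hlt hμ hK using fun w => hacc _ (hlim.succ_lt (e.symm w).2)
  have (w : Shrink (Set.Iio lam)) : Fact (μ w).IsRegular := ⟨hμ w⟩
  choose J _ _ p hp using fun w => (hK w).exists_colimitPresentation M
  have hcof (β : Cardinal.{v}) (hβ : β < lam) : ∃ w, β < μ w :=
    ⟨e ⟨β, hβ⟩, (Order.lt_succ β).trans_le (by simpa using hle (e ⟨β, hβ⟩))⟩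
  obtain ⟨w, hw⟩ := ColimitPresentation.exists_isCardinalPresentable_of_cofinal hlt hcof p
  exact (hmin (μ w) (hμ w) ((isPresentableObj_iff_isCardinalPresentable _ M).2 hw)).not_gt (hlt w)

theorem exists_eq_succ_of_hasPresRank {μ₀ : Cardinal.{v}} (hμ₀ : μ₀.IsRegular)
    (hwell : ∀ θ : Cardinal.{v}, θ.IsRegular → μ₀ ≤ θ → IsAccCat θ (Order.succ θ) K)
    {M : K} {lam : Cardinal.{v}} (hM : HasPresRank lam M) (hnot : ¬ IsPresentableObj μ₀ M) :
    ∃ κ : Cardinal.{v}, lam = Order.succ κ := by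
  by_contra hsucc
  have hμ₀lam : μ₀ < lam := lt_of_not_ge fun h => hnot (hM.2.1.mono h)
  have hlim : Order.IsSuccLimit lam := Order.isSuccLimit_iff_of_orderBot.2
    ⟨hM.1.pos.ne', Order.isSuccPrelimit_iff_succ_ne.2 fun κ hκ => hsucc ⟨κ, hκ.symm⟩⟩
  refine not_hasPresRank_of_isAccCat hM.1 hlim (fun κ hκ => ?_) M hM
  have hreg : (Order.succ (max κ μ₀)).IsRegular :=
    isRegular_succ (hμ₀.aleph0_le.trans (le_max_right _ _))
  exact ⟨_, (le_max_left _ _).trans (Order.le_succ _), hlim.succ_lt (max_lt hκ hμ₀lam), hreg,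
    hwell _ hreg ((le_max_right _ _).trans (Order.le_succ _))⟩

end

/-- (1) If `λ` is weakly inaccessible and `K` is `μ`-accessible for unboundedly many regular
`μ < λ`, then `K` has no object of presentability rank `λ`. (2) In particular, in a well
`μ₀`-accessible category, the presentability rank of any object that is not `μ₀`-presentable
is a successor cardinal. -/
theorem stmt13 {K : Type u} [Category.{v} K] :
    (∀ lam : Cardinal.{v}, lam.IsRegular → Order.IsSuccLimit lam → ℵ₀ < lam →
      (∀ κ < lam, ∃ μ : Cardinal.{v},
        κ ≤ μ ∧ μ < lam ∧ μ.IsRegular ∧ IsAccCat μ (Order.succ μ) K) →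
      ¬ ∃ M : K, HasPresRank lam M) ∧
    (∀ μ₀ : Cardinal.{v}, μ₀.IsRegular →
      (∀ θ : Cardinal.{v}, θ.IsRegular → μ₀ ≤ θ → IsAccCat θ (Order.succ θ) K) →
      ∀ (M : K) (lam : Cardinal.{v}), HasPresRank lam M → ¬ IsPresentableObj μ₀ M →
        ∃ κ : Cardinal.{v}, lam = Order.succ κ) :=
  ⟨fun _ hreg hlim _ hacc ⟨M, hM⟩ => not_hasPresRank_of_isAccCat hreg hlim hacc M hM,
    fun _ hμ₀ hwell _ _ hM hnot => exists_eq_succ_of_hasPresRank hμ₀ hwell hM hnot⟩
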